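/- arXiv:1212.6074 — 3 statements merged into one kernel-verified Lean document; each statement's English description precedes it below -/
import Mathlib

section
/- Let M, N, K be positive integers with K ≥ 2 and N ≥ (K+1)M−1, let s be an integer with 1 ≤ s ≤ K, let r be a real with 0 ≤ r < M, set l = ⌊r⌋ and C = MN − l(l+1) − (N+M−1−2l)·r. If α_1, …, α_{sM} are nonnegative reals satisfying Σ_{a=0}^{s−1} Σ_{b=1}^{M} (N−b+1)·α_{aM+b} = s·C, then Σ_{a=0}^{s−1} Σ_{b=1}^{M} (N − (aM+b) + 1)·α_{aM+b} ≥ C. -/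
/-- The index `l` of the interval of average dimensions per channel use `D`
to which `D` belongs: the smallest `l` with `D ≤ (MN − l(l+1))/(N+M−1−2l)`. -/
noncomputable def lIdx (M N : ℕ) (D : ℝ) : ℕ :=
  sInf {l : ℕ |
    D ≤ ((M : ℝ) * (N : ℝ) - (l : ℝ) * ((l : ℝ) + 1)) /
        ((N : ℝ) + (M : ℝ) - 1 - 2 * (l : ℝ))}

/-- The upper bound `d^{D}_{M,N}(r)` on the DMT of infinite constellations with
`D` average dimensions per channel use, in a point-to-point channel with `M`
transmit and `N` receive antennas.  It vanishes for `r ≥ D` or `D = 0`, and for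
`0 ≤ r < D` it is the straight line `((M−l)(N−l)/(D−l))·(D−r)` where `l = lIdx M N D`
is determined by the interval of `D`. -/
noncomputable def dIC (M N : ℕ) (D r : ℝ) : ℝ :=
  if D ≤ 0 ∨ D ≤ r then 0
  else
    (((M : ℝ) - (lIdx M N D : ℝ)) * ((N : ℝ) - (lIdx M N D : ℝ)) /
        (D - (lIdx M N D : ℝ))) * (D - r)

/-- The optimal point-to-point DMT `d^{FC}_{M,N}(r)` of finite constellations:
the piecewise linear function through the points `(l, (M−l)(N−l))`. -/
noncomputable def dFC (M N : ℕ) (r : ℝ) : ℝ :=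
  ((M : ℝ) - (⌊r⌋ : ℝ)) * ((N : ℝ) - (⌊r⌋ : ℝ))
    + (r - (⌊r⌋ : ℝ)) *
      (((M : ℝ) - (⌊r⌋ : ℝ) - 1) * ((N : ℝ) - (⌊r⌋ : ℝ) - 1)
        - ((M : ℝ) - (⌊r⌋ : ℝ)) * ((N : ℝ) - (⌊r⌋ : ℝ)))

/-- The optimal symmetric multiple-access DMT `d^{FC}_{K,M,N}(r)` of finite
constellations: it equals `d^{FC}_{M,N}(r)` for `r ≤ min(N/(K+1), M)` and
`d^{FC}_{KM,N}(K·r)` afterwards. -/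
noncomputable def dFCmac (K M N : ℕ) (r : ℝ) : ℝ :=
  if r ≤ min ((N : ℝ) / ((K : ℝ) + 1)) (M : ℝ) then dFC M N r
  else dFC (K * M) N ((K : ℝ) * r)

/-!
Since `(s + 1) M ≤ N + 1`, every weight `N - b + 1` of the given sum is at most `s` times the
corresponding weight `N - (aM + b) + 1` of the target sum. With nonnegative `α` this gives
`s C ≤ s · (target sum)`, and dividing by `s` yields the bound.
-/

theorem le_sum_of_sum_eq_mul_of_le_mul {ι : Type*} (t : Finset ι) {f g : ι → ℝ} {c s : ℝ}
    (hs : 0 < s) (hf : ∑ i ∈ t, f i = s * c) (hfg : ∀ i ∈ t, f i ≤ s * g i) :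
    c ≤ ∑ i ∈ t, g i := by
  refine le_of_mul_le_mul_left ?_ hs
  rw [← hf, Finset.mul_sum]
  exact Finset.sum_le_sum hfg

theorem succ_mul_le_succ_of_le {M N K s : ℕ} (hNK : (K + 1) * M - 1 ≤ N) (hsK : s ≤ K) :
    (s + 1) * M ≤ N + 1 := by
  have : (s + 1) * M ≤ (K + 1) * M := Nat.mul_le_mul_right M (by omega)
  omega

theorem block_index_le {M s a b : ℕ} (ha : a < s) (hb : b ≤ M) : a * M + b ≤ s * M :=
  calc a * M + b ≤ (a + 1) * M := by rw [add_mul, one_mul]; omega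
    _ ≤ s * M := Nat.mul_le_mul_right M ha

theorem weight_le_mul_shifted_weight {M N s a b : ℕ} (hMN : (s + 1) * M ≤ N + 1) (ha : a < s)
    (hb : b ≤ M) :
    (N : ℝ) - b + 1 ≤ s * ((N : ℝ) - ((a * M + b : ℕ) : ℝ) + 1) := by
  have hMN' : ((s : ℝ) + 1) * M ≤ N + 1 := by exact_mod_cast hMN
  have ha' : (a : ℝ) + 1 ≤ s := by exact_mod_cast ha
  have hb' : (b : ℝ) ≤ M := by exact_mod_cast hb
  push_cast
  -- `s (N - aM - b + 1) - (N - b + 1) = (s - 1)(N - b + 1 - sM) + sM (s - 1 - a)`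
  nlinarith [mul_nonneg (by linarith : (0 : ℝ) ≤ s - 1) (by linarith : (0 : ℝ) ≤ N - b + 1 - s * M),
    mul_nonneg (by positivity : (0 : ℝ) ≤ s * M) (by linarith : (0 : ℝ) ≤ s - 1 - a)]

theorem stmt16_general (M N K : ℕ) (hNK : (K + 1) * M - 1 ≤ N) (s : ℕ) (hs1 : 1 ≤ s) (hsK : s ≤ K)
    (r : ℝ) :
    let C : ℝ := (M : ℝ) * (N : ℝ) - (⌊r⌋ : ℝ) * ((⌊r⌋ : ℝ) + 1)
        - ((N : ℝ) + (M : ℝ) - 1 - 2 * (⌊r⌋ : ℝ)) * r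
    ∀ α : ℕ → ℝ, (∀ m, 1 ≤ m → m ≤ s * M → 0 ≤ α m) →
      (∑ a ∈ Finset.range s, ∑ b ∈ Finset.Icc 1 M,
          ((N : ℝ) - (b : ℝ) + 1) * α (a * M + b)) = (s : ℝ) * C →
      C ≤ ∑ a ∈ Finset.range s, ∑ b ∈ Finset.Icc 1 M,
            ((N : ℝ) - ((a * M + b : ℕ) : ℝ) + 1) * α (a * M + b) := by
  intro C α hα hsum
  have hMN := succ_mul_le_succ_of_le hNK hsK
  rw [← Finset.sum_product'] at hsum ⊢
  refine le_sum_of_sum_eq_mul_of_le_mul _ (by exact_mod_cast hs1) hsum ?_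
  rintro ⟨a, b⟩ hab
  obtain ⟨ha, hb1, hbM⟩ : a < s ∧ 1 ≤ b ∧ b ≤ M := by simpa [and_assoc] using hab
  rw [← mul_assoc]
  exact mul_le_mul_of_nonneg_right (weight_le_mul_shifted_weight hMN ha hbM)
    (hα _ (by omega) (block_index_le ha hbM))

theorem stmt16 (M N K : ℕ) (hM : 0 < M) (hN : 0 < N) (hK : 2 ≤ K)
    (hNK : (K + 1) * M - 1 ≤ N) (s : ℕ) (hs1 : 1 ≤ s) (hsK : s ≤ K)
    (r : ℝ) (hr0 : 0 ≤ r) (hrM : r < (M : ℝ)) :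
    let C : ℝ := (M : ℝ) * (N : ℝ) - (⌊r⌋ : ℝ) * ((⌊r⌋ : ℝ) + 1)
        - ((N : ℝ) + (M : ℝ) - 1 - 2 * (⌊r⌋ : ℝ)) * r
    ∀ α : ℕ → ℝ, (∀ m, 1 ≤ m → m ≤ s * M → 0 ≤ α m) →
      (∑ a ∈ Finset.range s, ∑ b ∈ Finset.Icc 1 M,
          ((N : ℝ) - (b : ℝ) + 1) * α (a * M + b)) = (s : ℝ) * C →
      C ≤ ∑ a ∈ Finset.range s, ∑ b ∈ Finset.Icc 1 M,
            ((N : ℝ) - ((a * M + b : ℕ) : ℝ) + 1) * α (a * M + b) :=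
  stmt16_general M N K hNK s hs1 hsK r
end

section
/- Let M, N, K be positive integers with K ≥ 2 and N ≥ (K+1)M−1, let s be an integer with 1 ≤ s ≤ K, let r be a real with 0 ≤ r < M, set l = ⌊r⌋ and C = MN − l(l+1) − (N+M−1−2l)·r. For a family ξ = (ξ_{i,j})_{1 ≤ i ≤ N, 1 ≤ j ≤ KM} of reals in [0, KMN], define for each a ∈ {0,…,s−1} and b ∈ {1,…,M}: A(aM+b) = (N−b+1)·min_{aM+b ≤ z ≤ N} ξ_{z, aM+b} + Σ_{i=1}^{min(M−l−1, b−1)} min_{aM+b−i ≤ z ≤ N} ξ_{z, aM+b} (the second sum being empty when min(M−l−1, b−1) = 0). Then the minimum over all such families ξ of (s·C − Σ_{m=1}^{sM} A(m))⁺ + Σ_{i=1}^{N} Σ_{j=1}^{KM} ξ_{i,j} equals the minimum over all families α = (α_1,…,α_{sM}) of reals in [0, KMN] satisfying Σ_{a=0}^{s−1} Σ_{b=1}^{M} (N−b+1)·α_{aM+b} = s·C, of Σ_{m=1}^{sM} (N−m+1)·α_m. Here x⁺ = max(x, 0). -/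
open Finset

theorem sum_range_sum_Icc_mul_add {β : Type*} [AddCommMonoid β] (M s : ℕ) (F : ℕ → β) :
    ∑ a ∈ range s, ∑ b ∈ Icc 1 M, F (a * M + b) = ∑ m ∈ Icc 1 (s * M), F m := by
  have hIcc : ∀ n, Icc 1 n = Ioc 0 n := fun n => Icc_add_one_left_eq_Ioc 0 n
  induction s with
  | zero => simp
  | succ s ih =>
    have hblock : ∑ b ∈ Icc 1 M, F (s * M + b) = ∑ m ∈ Ioc (s * M) (s * M + M), F m := by
      rw [← Icc_add_one_left_eq_Ioc, ← map_add_left_Icc, sum_map]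
      rfl
    rw [sum_range_succ, ih, hblock, hIcc, hIcc, Nat.succ_mul,
      sum_Ioc_consecutive F (Nat.zero_le _) (Nat.le_add_right _ _)]

theorem sum_Icc_one_sub_one_add_sum_Icc {β : Type*} [AddCommMonoid β] (f : ℕ → β) {j N : ℕ}
    (hj : 1 ≤ j) (hjN : j ≤ N + 1) :
    ∑ z ∈ Icc 1 (j - 1), f z + ∑ z ∈ Icc j N, f z = ∑ z ∈ Icc 1 N, f z := by
  obtain ⟨i, rfl⟩ : ∃ i, j = i + 1 := ⟨j - 1, by omega⟩
  rw [Nat.add_sub_cancel, Icc_add_one_left_eq_Ioc, ← zero_add 1, Icc_add_one_left_eq_Ioc,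
    Icc_add_one_left_eq_Ioc, sum_Ioc_consecutive f (Nat.zero_le i) (by omega)]

section ColumnMinimum

variable (ξ : ℕ → ℕ → ℝ) (N : ℕ) {w j : ℕ}

noncomputable def colMin (w j : ℕ) : ℝ := sInf {t : ℝ | ∃ z : ℕ, w ≤ z ∧ z ≤ N ∧ t = ξ z j}

theorem colMin_le {z : ℕ} (hwz : w ≤ z) (hzN : z ≤ N) : colMin ξ N w j ≤ ξ z j := by
  have hfin : {t : ℝ | ∃ z : ℕ, w ≤ z ∧ z ≤ N ∧ t = ξ z j}.Finite :=
    ((Set.finite_Icc w N).image fun z => ξ z j).subset <| by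
      rintro t ⟨z, hwz, hzN, rfl⟩
      exact ⟨z, ⟨hwz, hzN⟩, rfl⟩
  exact csInf_le hfin.bddBelow ⟨z, hwz, hzN, rfl⟩

theorem colMin_eq {z : ℕ} (hwz : w ≤ z) (hzN : z ≤ N)
    (hmin : ∀ z', w ≤ z' → z' ≤ N → ξ z j ≤ ξ z' j) : colMin ξ N w j = ξ z j :=
  IsLeast.csInf_eq ⟨⟨z, hwz, hzN, rfl⟩, by rintro t ⟨z', hwz', hz'N, rfl⟩; exact hmin z' hwz' hz'N⟩

theorem colMin_nonneg (hwN : w ≤ N) (hξ : ∀ z, w ≤ z → z ≤ N → 0 ≤ ξ z j) :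
    0 ≤ colMin ξ N w j :=
  le_csInf ⟨ξ N j, N, hwN, le_rfl, rfl⟩ (by rintro t ⟨z, hwz, hzN, rfl⟩; exact hξ z hwz hzN)

theorem mul_colMin_le_sum (hjN : j ≤ N) :
    ((N : ℝ) - j + 1) * colMin ξ N j j ≤ ∑ z ∈ Icc j N, ξ z j := by
  have h := card_nsmul_le_sum (Icc j N) (fun z => ξ z j) (colMin ξ N j j)
    fun z hz => colMin_le ξ N (mem_Icc.1 hz).1 (mem_Icc.1 hz).2
  rwa [Nat.card_Icc, nsmul_eq_mul, Nat.cast_sub (by omega), Nat.cast_add, Nat.cast_one,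
    add_sub_right_comm] at h

theorem sum_colMin_le_sum {k : ℕ} (hkj : k < j) (hjN : j ≤ N)
    (hξ : ∀ z, 1 ≤ z → z ≤ N → 0 ≤ ξ z j) :
    ∑ i ∈ Icc 1 k, colMin ξ N (j - i) j ≤ ∑ z ∈ Icc 1 (j - 1), ξ z j := by
  calc ∑ i ∈ Icc 1 k, colMin ξ N (j - i) j
      ≤ ∑ i ∈ Icc 1 k, ξ (j - i) j :=
        sum_le_sum fun i _ => colMin_le ξ N le_rfl (by omega)
    _ = ∑ z ∈ (Icc 1 k).image (j - ·), ξ z j := by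
        rw [sum_image]
        intro i hi i' hi' h
        simp only [coe_Icc, Set.mem_Icc] at hi hi' h
        omega
    _ ≤ ∑ z ∈ Icc 1 (j - 1), ξ z j := by
        refine sum_le_sum_of_subset_of_nonneg (fun z hz => ?_) fun z hz _ =>
          hξ z (mem_Icc.1 hz).1 (by have := (mem_Icc.1 hz).2; omega)
        simp only [mem_image, mem_Icc] at hz ⊢
        omega

end ColumnMinimum

theorem mul_add_le_mul_of_lt {a b s M : ℕ} (ha : a < s) (hb : b ≤ M) : a * M + b ≤ s * M :=
  calc a * M + b ≤ (a + 1) * M := by rw [Nat.succ_mul]; omega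
    _ ≤ s * M := Nat.mul_le_mul_right M ha

noncomputable def reductionFactor (M N s : ℕ) : ℝ := ((N : ℝ) - s * M + 1) / (N - M + 1)

section ReductionFactor

variable {M N s : ℕ}

theorem sub_add_one_pos_of_mul_le (hs : 1 ≤ s) (hsMN : s * M ≤ N) : (0 : ℝ) < N - M + 1 := by
  have : (M : ℝ) ≤ N := by exact_mod_cast (Nat.le_mul_of_pos_left M hs).trans hsMN
  linarith

theorem reductionFactor_nonneg (hs : 1 ≤ s) (hsMN : s * M ≤ N) : 0 ≤ reductionFactor M N s := by
  have : (s : ℝ) * M ≤ N := by exact_mod_cast hsMN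
  exact div_nonneg (by linarith) (sub_add_one_pos_of_mul_le hs hsMN).le

theorem reductionFactor_le_one (hs : 1 ≤ s) (hsMN : s * M ≤ N) : reductionFactor M N s ≤ 1 := by
  have : (M : ℝ) ≤ s * M := by exact_mod_cast Nat.le_mul_of_pos_left M hs
  exact (div_le_one (sub_add_one_pos_of_mul_le hs hsMN)).2 (by linarith)

theorem reductionFactor_mul_le {a b : ℕ} (ha : a < s) (hbM : b ≤ M) (hsMN : s * M ≤ N) :
    reductionFactor M N s * ((N : ℝ) - b + 1) ≤ (N : ℝ) - (a * M + b : ℕ) + 1 := by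
  have hden := sub_add_one_pos_of_mul_le (by omega) hsMN
  obtain ⟨p, rfl⟩ : ∃ p, s = p + 1 := ⟨s - 1, by omega⟩
  have hap : (a : ℝ) ≤ p := by exact_mod_cast Nat.lt_succ_iff.1 ha
  have hbM' : (b : ℝ) ≤ M := by exact_mod_cast hbM
  rw [reductionFactor, div_mul_eq_mul_div, div_le_iff₀ hden]
  push_cast
  -- the two sides differ by M * ((p - a) * (N + 1 - M) + p * (M - b))
  nlinarith [mul_nonneg (mul_nonneg (Nat.cast_nonneg M) (sub_nonneg.2 hap))
      (by linarith : (0 : ℝ) ≤ N + 1 - M),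
    mul_nonneg (mul_nonneg (Nat.cast_nonneg M) (Nat.cast_nonneg p)) (sub_nonneg.2 hbM')]

end ReductionFactor

theorem mul_le_max_sub_add {ρ c T X : ℝ} (hρ0 : 0 ≤ ρ) (hρ1 : ρ ≤ 1) (h : ρ * T ≤ X) :
    ρ * c ≤ max (c - T) 0 + X := by
  rcases le_total c T with hcT | hTc
  · nlinarith [le_max_right (c - T) 0]
  · nlinarith [le_max_left (c - T) 0, mul_nonneg (sub_nonneg.2 hρ1) (sub_nonneg.2 hTc)]

/-- The paper's `A(aM+b)`, with `k = M − l − 1`. -/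
noncomputable def blockGain (M N k : ℕ) (ξ : ℕ → ℕ → ℝ) (a b : ℕ) : ℝ :=
  ((N : ℝ) - (b : ℝ) + 1) * colMin ξ N (a * M + b) (a * M + b)
    + ∑ i ∈ Icc 1 (min k (b - 1)), colMin ξ N (a * M + b - i) (a * M + b)

section BlockGain

variable {M N k s a b : ℕ} {ξ : ℕ → ℕ → ℝ}

theorem mul_blockGain_le_sum (ha : a < s) (hb1 : 1 ≤ b) (hbM : b ≤ M) (hsMN : s * M ≤ N)
    (hξ : ∀ z, 1 ≤ z → z ≤ N → 0 ≤ ξ z (a * M + b)) :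
    reductionFactor M N s * blockGain M N k ξ a b ≤ ∑ z ∈ Icc 1 N, ξ z (a * M + b) := by
  set j := a * M + b
  have hjN : j ≤ N := (mul_add_le_mul_of_lt ha hbM).trans hsMN
  have hρ1 := reductionFactor_le_one (by omega) hsMN
  have hμ0 : 0 ≤ colMin ξ N j j := colMin_nonneg ξ N hjN fun z hz => hξ z (by omega)
  have hS0 : 0 ≤ ∑ i ∈ Icc 1 (min k (b - 1)), colMin ξ N (j - i) j :=
    sum_nonneg fun i hi => colMin_nonneg ξ N (by omega) fun z hz => hξ z <| by
      have := (mem_Icc.1 hi).2; have := min_le_right k (b - 1); omega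
  calc reductionFactor M N s * blockGain M N k ξ a b
      = reductionFactor M N s * ((N : ℝ) - b + 1) * colMin ξ N j j
        + reductionFactor M N s * ∑ i ∈ Icc 1 (min k (b - 1)), colMin ξ N (j - i) j := by
        rw [blockGain, mul_add, mul_assoc]
    _ ≤ ((N : ℝ) - j + 1) * colMin ξ N j j
        + ∑ i ∈ Icc 1 (min k (b - 1)), colMin ξ N (j - i) j := by
        gcongr
        · exact reductionFactor_mul_le ha hbM hsMN
        · exact mul_le_of_le_one_left hS0 hρ1
    _ ≤ ∑ z ∈ Icc j N, ξ z j + ∑ z ∈ Icc 1 (j - 1), ξ z j :=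
        add_le_add (mul_colMin_le_sum ξ N hjN)
          (sum_colMin_le_sum ξ N (by have := min_le_right k (b - 1); omega) hjN hξ)
    _ = ∑ z ∈ Icc 1 N, ξ z j := by
        rw [add_comm, sum_Icc_one_sub_one_add_sum_Icc _ (by omega) (by omega)]

end BlockGain

theorem mul_sum_blockGain_le_sum {M N J k s : ℕ} {ξ : ℕ → ℕ → ℝ} (hsMJ : s * M ≤ J)
    (hsMN : s * M ≤ N) (hξ : ∀ i j, 1 ≤ i → i ≤ N → 1 ≤ j → j ≤ J → 0 ≤ ξ i j) :
    reductionFactor M N s * ∑ a ∈ range s, ∑ b ∈ Icc 1 M, blockGain M N k ξ a b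
      ≤ ∑ i ∈ Icc 1 N, ∑ j ∈ Icc 1 J, ξ i j := by
  have hcol : ∀ j ∈ Icc 1 J, 0 ≤ ∑ i ∈ Icc 1 N, ξ i j := fun j hj =>
    sum_nonneg fun i hi =>
      hξ i j (mem_Icc.1 hi).1 (mem_Icc.1 hi).2 (mem_Icc.1 hj).1 (mem_Icc.1 hj).2
  calc reductionFactor M N s * ∑ a ∈ range s, ∑ b ∈ Icc 1 M, blockGain M N k ξ a b
      = ∑ a ∈ range s, ∑ b ∈ Icc 1 M, reductionFactor M N s * blockGain M N k ξ a b := by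
        simp only [mul_sum]
    _ ≤ ∑ a ∈ range s, ∑ b ∈ Icc 1 M, ∑ i ∈ Icc 1 N, ξ i (a * M + b) := by
        refine sum_le_sum fun a ha => sum_le_sum fun b hb => ?_
        have hj := mul_add_le_mul_of_lt (mem_range.1 ha) (mem_Icc.1 hb).2
        exact mul_blockGain_le_sum (mem_range.1 ha) (mem_Icc.1 hb).1 (mem_Icc.1 hb).2 hsMN
          fun z hz1 hzN => hξ z _ hz1 hzN (by have := (mem_Icc.1 hb).1; omega) (hj.trans hsMJ)
    _ = ∑ j ∈ Icc 1 (s * M), ∑ i ∈ Icc 1 N, ξ i j :=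
        sum_range_sum_Icc_mul_add M s fun j => ∑ i ∈ Icc 1 N, ξ i j
    _ ≤ ∑ j ∈ Icc 1 J, ∑ i ∈ Icc 1 N, ξ i j :=
        sum_le_sum_of_subset_of_nonneg (Icc_subset_Icc le_rfl hsMJ) fun j hj _ => hcol j hj
    _ = ∑ i ∈ Icc 1 N, ∑ j ∈ Icc 1 J, ξ i j := sum_comm

def relaxedValues (M N J s k : ℕ) (B c : ℝ) : Set ℝ :=
  {x : ℝ | ∃ ξ : ℕ → ℕ → ℝ,
    (∀ i j, 1 ≤ i → i ≤ N → 1 ≤ j → j ≤ J → 0 ≤ ξ i j ∧ ξ i j ≤ B) ∧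
    x = max (c - ∑ a ∈ range s, ∑ b ∈ Icc 1 M, blockGain M N k ξ a b) 0
      + ∑ i ∈ Icc 1 N, ∑ j ∈ Icc 1 J, ξ i j}

def reducedValues (M N s : ℕ) (B c : ℝ) : Set ℝ :=
  {y : ℝ | ∃ α : ℕ → ℝ,
    (∀ m, 1 ≤ m → m ≤ s * M → 0 ≤ α m ∧ α m ≤ B) ∧
    (∑ a ∈ range s, ∑ b ∈ Icc 1 M, ((N : ℝ) - (b : ℝ) + 1) * α (a * M + b)) = c ∧
    y = ∑ m ∈ Icc 1 (s * M), ((N : ℝ) - (m : ℝ) + 1) * α m}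

def stairs (n : ℕ) (α : ℕ → ℝ) (i j : ℕ) : ℝ := if j ≤ n ∧ j ≤ i then α j else 0

section Stairs

variable {M N s n : ℕ} {α : ℕ → ℝ}

theorem blockGain_stairs {k a b : ℕ} (ha : a < s) (hb1 : 1 ≤ b) (hbM : b ≤ M) (hsMN : s * M ≤ N)
    (hα : 0 ≤ α (a * M + b)) :
    blockGain M N k (stairs (s * M) α) a b = ((N : ℝ) - b + 1) * α (a * M + b) := by
  have hj := mul_add_le_mul_of_lt ha hbM
  have hdiag : colMin (stairs (s * M) α) N (a * M + b) (a * M + b) = α (a * M + b) := by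
    refine (colMin_eq _ N le_rfl (hj.trans hsMN) fun z hz _ => ?_).trans ?_
    · simp [stairs, hj, hz]
    · simp [stairs, hj]
  -- below the diagonal the column vanishes, so every minimum reaching there is `0`
  have hbelow : ∀ i ∈ Icc 1 (min k (b - 1)),
      colMin (stairs (s * M) α) N (a * M + b - i) (a * M + b) = 0 := by
    intro i hi
    have hib : 1 ≤ i ∧ i < b := by have := mem_Icc.1 hi; have := min_le_right k (b - 1); omega
    rw [colMin_eq _ N le_rfl (by omega) fun z _ _ => ?_]
    · simp only [stairs]; rw [if_neg (by omega)]
    · simp only [stairs]; rw [if_neg (by omega)]; split_ifs <;> simp [hα]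
  rw [blockGain, hdiag, sum_eq_zero hbelow, add_zero]

theorem sum_sum_stairs {J : ℕ} (hnJ : n ≤ J) (hnN : n ≤ N) :
    ∑ i ∈ Icc 1 N, ∑ j ∈ Icc 1 J, stairs n α i j = ∑ j ∈ Icc 1 n, ((N : ℝ) - j + 1) * α j := by
  rw [sum_comm, ← sum_subset (Icc_subset_Icc le_rfl hnJ) fun j hjJ hj => sum_eq_zero fun i _ => ?_]
  · refine sum_congr rfl fun j hj => ?_
    obtain ⟨hj1, hjn⟩ := mem_Icc.1 hj
    have hfilter : (Icc 1 N).filter (j ≤ ·) = Icc j N := by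
      ext i; simp only [mem_filter, mem_Icc]; omega
    simp only [stairs, hjn, true_and]
    rw [← sum_filter, hfilter, sum_const, Nat.card_Icc, nsmul_eq_mul, Nat.cast_sub (by omega)]
    push_cast
    ring
  · simp only [mem_Icc, not_and, not_le] at hj hjJ
    simp only [stairs]
    rw [if_neg (by omega)]

end Stairs

section Values

variable {M N J s k : ℕ} {B c : ℝ}

theorem reducedValues_subset_relaxedValues (hsMJ : s * M ≤ J) (hsMN : s * M ≤ N) (hB : 0 ≤ B) :
    reducedValues M N s B c ⊆ relaxedValues M N J s k B c := by
  rintro y ⟨α, hα, hc, rfl⟩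
  refine ⟨stairs (s * M) α, fun i j _ _ hj1 _ => ?_, ?_⟩
  · unfold stairs
    split_ifs with h
    exacts [hα j hj1 h.1, ⟨le_rfl, hB⟩]
  · have hgain : ∑ a ∈ range s, ∑ b ∈ Icc 1 M, blockGain M N k (stairs (s * M) α) a b = c := by
      rw [← hc]
      refine sum_congr rfl fun a ha => sum_congr rfl fun b hb => ?_
      obtain ⟨hb1, hbM⟩ := mem_Icc.1 hb
      exact blockGain_stairs (mem_range.1 ha) hb1 hbM hsMN
        (hα _ (by omega) (mul_add_le_mul_of_lt (mem_range.1 ha) hbM)).1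
    rw [hgain, sub_self, max_self, zero_add, sum_sum_stairs hsMJ hsMN]

theorem reductionFactor_mul_mem_lowerBounds (hs : 1 ≤ s) (hsMJ : s * M ≤ J) (hsMN : s * M ≤ N) :
    reductionFactor M N s * c ∈ lowerBounds (relaxedValues M N J s k B c) := by
  rintro x ⟨ξ, hξ, rfl⟩
  exact mul_le_max_sub_add (reductionFactor_nonneg hs hsMN) (reductionFactor_le_one hs hsMN)
    (mul_sum_blockGain_le_sum hsMJ hsMN fun i j hi hiN hj hjJ => (hξ i j hi hiN hj hjJ).1)

-- all the mass sits on the last index `s * M`, where the cost per unit of gain is smallest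
theorem reductionFactor_mul_mem_reducedValues (hM : 0 < M) (hs : 1 ≤ s) (hsMN : s * M ≤ N)
    (hc0 : 0 ≤ c) (hcB : c ≤ ((N : ℝ) - M + 1) * B) :
    reductionFactor M N s * c ∈ reducedValues M N s B c := by
  obtain ⟨p, rfl⟩ : ∃ p, s = p + 1 := ⟨s - 1, by omega⟩
  have hlast : p * M + M = (p + 1) * M := (Nat.succ_mul p M).symm
  have hden := sub_add_one_pos_of_mul_le hs hsMN
  refine ⟨Pi.single ((p + 1) * M) (c / (N - M + 1)), fun m _ _ => ?_, ?_, ?_⟩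
  · rw [Pi.single_apply]
    split_ifs
    · exact ⟨div_nonneg hc0 hden.le, (div_le_iff₀ hden).2 (by linarith)⟩
    · exact ⟨le_rfl, nonneg_of_mul_nonneg_right (hc0.trans hcB) hden⟩
  · rw [sum_eq_single_of_mem p (self_mem_range_succ p) fun a ha hap => sum_eq_zero fun b hb => ?_,
      sum_eq_single_of_mem M (mem_Icc.2 ⟨hM, le_rfl⟩) fun b hb hbM => ?_]
    · rw [hlast, Pi.single_eq_same]; field_simp
    · rw [Pi.single_eq_of_ne (by have := mem_Icc.1 hb; omega), mul_zero]
    · have := mul_add_le_mul_of_lt (Nat.lt_of_le_of_ne (Nat.lt_succ_iff.1 (mem_range.1 ha)) hap)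
        (mem_Icc.1 hb).2
      rw [Pi.single_eq_of_ne (by omega), mul_zero]
  · rw [sum_eq_single_of_mem ((p + 1) * M) (mem_Icc.2 ⟨Nat.mul_pos p.succ_pos hM, le_rfl⟩)
      fun m _ hm => by rw [Pi.single_eq_of_ne hm, mul_zero], Pi.single_eq_same, reductionFactor]
    push_cast
    ring

theorem sInf_relaxedValues_eq_sInf_reducedValues (hM : 0 < M) (hs : 1 ≤ s) (hsMJ : s * M ≤ J)
    (hsMN : s * M ≤ N) (hc0 : 0 ≤ c) (hcB : c ≤ ((N : ℝ) - M + 1) * B) :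
    sInf (relaxedValues M N J s k B c) = sInf (reducedValues M N s B c) := by
  have hB : 0 ≤ B :=
    nonneg_of_mul_nonneg_right (hc0.trans hcB) (sub_add_one_pos_of_mul_le hs hsMN)
  have hsub : reducedValues M N s B c ⊆ relaxedValues M N J s k B c :=
    reducedValues_subset_relaxedValues hsMJ hsMN hB
  have hmem := reductionFactor_mul_mem_reducedValues hM hs hsMN hc0 hcB
  have hlow : reductionFactor M N s * c ∈ lowerBounds (relaxedValues M N J s k B c) :=
    reductionFactor_mul_mem_lowerBounds hs hsMJ hsMN
  rw [IsLeast.csInf_eq ⟨hsub hmem, hlow⟩, IsLeast.csInf_eq ⟨hmem, fun y hy => hlow (hsub hy)⟩]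

end Values

-- between `r = l` and `r = l + 1` the expression interpolates linearly from
-- `(M - l) * (N - l)` to `(M - l - 1) * (N - l - 1)`
theorem floorInterp_nonneg {M N l r : ℝ} (hlr : l ≤ r) (hrl : r ≤ l + 1) (hlM : l + 1 ≤ M)
    (hMN : M ≤ N) : 0 ≤ M * N - l * (l + 1) - (N + M - 1 - 2 * l) * r := by
  have hinterp : M * N - l * (l + 1) - (N + M - 1 - 2 * l) * r
      = (1 - (r - l)) * ((M - l) * (N - l)) + (r - l) * ((M - l - 1) * (N - l - 1)) := by ring
  rw [hinterp]
  have hM : 0 ≤ M - l - 1 := by linarith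
  have hN : 0 ≤ N - l - 1 := by linarith
  exact add_nonneg (mul_nonneg (by linarith) (mul_nonneg (by linarith) (by linarith)))
    (mul_nonneg (by linarith) (mul_nonneg hM hN))

theorem floorInterp_le_mul {M N l r : ℝ} (hl : 0 ≤ l) (hr : 0 ≤ r) (hlMN : 2 * l + 1 ≤ N + M) :
    M * N - l * (l + 1) - (N + M - 1 - 2 * l) * r ≤ M * N := by
  nlinarith [mul_nonneg (by linarith : 0 ≤ N + M - 1 - 2 * l) hr]

theorem stmt17_general (M N K : ℕ) (hM : 0 < M)
    (hNK : (K + 1) * M - 1 ≤ N) (s : ℕ) (hs1 : 1 ≤ s) (hsK : s ≤ K)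
    (r : ℝ) (hr0 : 0 ≤ r) (hrM : r < (M : ℝ)) :
    let l : ℕ := (⌊r⌋).toNat
    let C : ℝ := (M : ℝ) * (N : ℝ) - (l : ℝ) * ((l : ℝ) + 1)
        - ((N : ℝ) + (M : ℝ) - 1 - 2 * (l : ℝ)) * r
    let A : (ℕ → ℕ → ℝ) → ℕ → ℕ → ℝ := fun ξ a b =>
      ((N : ℝ) - (b : ℝ) + 1) *
          sInf {t : ℝ | ∃ z : ℕ, a * M + b ≤ z ∧ z ≤ N ∧ t = ξ z (a * M + b)}
        + ∑ i ∈ Finset.Icc 1 (min (M - l - 1) (b - 1)),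
            sInf {t : ℝ | ∃ z : ℕ, a * M + b - i ≤ z ∧ z ≤ N ∧ t = ξ z (a * M + b)}
    sInf {x : ℝ | ∃ ξ : ℕ → ℕ → ℝ,
        (∀ i j, 1 ≤ i → i ≤ N → 1 ≤ j → j ≤ K * M →
          0 ≤ ξ i j ∧ ξ i j ≤ (K : ℝ) * (M : ℝ) * (N : ℝ)) ∧
        x = max ((s : ℝ) * C - ∑ a ∈ Finset.range s, ∑ b ∈ Finset.Icc 1 M, A ξ a b) 0
            + ∑ i ∈ Finset.Icc 1 N, ∑ j ∈ Finset.Icc 1 (K * M), ξ i j}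
    = sInf {y : ℝ | ∃ α : ℕ → ℝ,
        (∀ m, 1 ≤ m → m ≤ s * M → 0 ≤ α m ∧ α m ≤ (K : ℝ) * (M : ℝ) * (N : ℝ)) ∧
        (∑ a ∈ Finset.range s, ∑ b ∈ Finset.Icc 1 M,
            ((N : ℝ) - (b : ℝ) + 1) * α (a * M + b)) = (s : ℝ) * C ∧
        y = ∑ m ∈ Finset.Icc 1 (s * M), ((N : ℝ) - (m : ℝ) + 1) * α m} := by
  intro l C A
  have hKMN : K * M ≤ N := by
    have := Nat.sub_le_iff_le_add.1 hNK
    rw [Nat.succ_mul] at this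
    omega
  have hsMK : s * M ≤ K * M := Nat.mul_le_mul_right M hsK
  have hMN : (M : ℝ) ≤ N := by exact_mod_cast (Nat.le_mul_of_pos_left M hs1).trans (hsMK.trans hKMN)
  have hl : (l : ℝ) ≤ r ∧ r < l + 1 ∧ (l : ℝ) + 1 ≤ M := by
    rw [show l = ⌊r⌋₊ from Int.floor_toNat r]
    exact ⟨Nat.floor_le hr0, Nat.lt_floor_add_one r, by exact_mod_cast (Nat.floor_lt hr0).2 hrM⟩
  have hC0 : 0 ≤ C := floorInterp_nonneg hl.1 hl.2.1.le hl.2.2 hMN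
  have hCMN : C ≤ M * N := floorInterp_le_mul (Nat.cast_nonneg l) hr0 (by linarith)
  have hsC : (s : ℝ) * C ≤ (N - M + 1) * (K * M * N) :=
    calc (s : ℝ) * C ≤ K * (M * N) := mul_le_mul (by exact_mod_cast hsK) hCMN hC0 (by positivity)
      _ ≤ (N - M + 1) * (K * M * N) := by
        rw [← mul_assoc]; exact le_mul_of_one_le_left (by positivity) (by linarith)
  exact sInf_relaxedValues_eq_sInf_reducedValues (k := M - l - 1) hM hs1 hsMK
    (hsMK.trans hKMN) (by positivity) hsC

theorem stmt17 (M N K : ℕ) (hM : 0 < M) (hN : 0 < N) (hK : 2 ≤ K)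
    (hNK : (K + 1) * M - 1 ≤ N) (s : ℕ) (hs1 : 1 ≤ s) (hsK : s ≤ K)
    (r : ℝ) (hr0 : 0 ≤ r) (hrM : r < (M : ℝ)) :
    let l : ℕ := (⌊r⌋).toNat
    let C : ℝ := (M : ℝ) * (N : ℝ) - (l : ℝ) * ((l : ℝ) + 1)
        - ((N : ℝ) + (M : ℝ) - 1 - 2 * (l : ℝ)) * r
    let A : (ℕ → ℕ → ℝ) → ℕ → ℕ → ℝ := fun ξ a b =>
      ((N : ℝ) - (b : ℝ) + 1) *
          sInf {t : ℝ | ∃ z : ℕ, a * M + b ≤ z ∧ z ≤ N ∧ t = ξ z (a * M + b)}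
        + ∑ i ∈ Finset.Icc 1 (min (M - l - 1) (b - 1)),
            sInf {t : ℝ | ∃ z : ℕ, a * M + b - i ≤ z ∧ z ≤ N ∧ t = ξ z (a * M + b)}
    sInf {x : ℝ | ∃ ξ : ℕ → ℕ → ℝ,
        (∀ i j, 1 ≤ i → i ≤ N → 1 ≤ j → j ≤ K * M →
          0 ≤ ξ i j ∧ ξ i j ≤ (K : ℝ) * (M : ℝ) * (N : ℝ)) ∧
        x = max ((s : ℝ) * C - ∑ a ∈ Finset.range s, ∑ b ∈ Finset.Icc 1 M, A ξ a b) 0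
            + ∑ i ∈ Finset.Icc 1 N, ∑ j ∈ Finset.Icc 1 (K * M), ξ i j}
    = sInf {y : ℝ | ∃ α : ℕ → ℝ,
        (∀ m, 1 ≤ m → m ≤ s * M → 0 ≤ α m ∧ α m ≤ (K : ℝ) * (M : ℝ) * (N : ℝ)) ∧
        (∑ a ∈ Finset.range s, ∑ b ∈ Finset.Icc 1 M,
            ((N : ℝ) - (b : ℝ) + 1) * α (a * M + b)) = (s : ℝ) * C ∧
        y = ∑ m ∈ Finset.Icc 1 (s * M), ((N : ℝ) - (m : ℝ) + 1) * α m} :=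
  stmt17_general M N K hM hNK s hs1 hsK r hr0 hrM
end

section
/- Let K ≥ 2, M ≥ 2 be integers, let l be an integer with 0 ≤ l ≤ 2M−3, set N = (K−1)M+1+l and L = min(N,KM). Set c_l = ⌊l/2⌋(⌊l/2⌋+1) + 2(⌊l/2⌋+1)(l/2 − ⌊l/2⌋) and d*(r) = MN − c_l − (N+M−1−l)·r. Define F : [0, L/K] → ℝ by F(r) = d^{FC}_{M,N}(r) for 0 ≤ r ≤ ⌊l/2⌋+1, F(r) = d*(r) for ⌊l/2⌋+1 ≤ r ≤ ((K−1)M+⌊(l+1)/2⌋)/K, and F(r) = d^{FC}_{KM,N}(K·r) for ((K−1)M+⌊(l+1)/2⌋)/K ≤ r ≤ L/K. Then F is well defined (the three pieces agree at the junction points) and F is a convex function on [0, L/K]. -/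
lemma dFC_eq_line (M N : ℕ) (s : ℝ) :
    dFC M N s = (M:ℝ)*(N:ℝ) - (⌊s⌋:ℝ)*((⌊s⌋:ℝ)+1) + (2*(⌊s⌋:ℝ)+1-(M:ℝ)-(N:ℝ))*s := by
  unfold dFC; ring

lemma lineLe (M N : ℕ) (k : ℤ) (s : ℝ) :
    (M:ℝ)*(N:ℝ) - (k:ℝ)*((k:ℝ)+1) + (2*(k:ℝ)+1-(M:ℝ)-(N:ℝ))*s ≤ dFC M N s := by
  rw [dFC_eq_line]
  have h1 : ((⌊s⌋:ℤ):ℝ) ≤ s := Int.floor_le s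
  have h2 : s < (⌊s⌋:ℝ) + 1 := Int.lt_floor_add_one s
  rcases lt_trichotomy k ⌊s⌋ with h | h | h
  · have h' : (k:ℝ) ≤ (⌊s⌋:ℝ) - 1 := by exact_mod_cast Int.le_sub_one_of_lt h
    nlinarith [mul_nonneg (by linarith : (0:ℝ) ≤ (⌊s⌋:ℝ) - k) (by linarith : (0:ℝ) ≤ (⌊s⌋:ℝ) - k - 1),
      mul_nonneg (by linarith : (0:ℝ) ≤ (⌊s⌋:ℝ) - k) (by linarith : (0:ℝ) ≤ s - ⌊s⌋)]
  · subst h; nlinarith []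
  · have h' : (⌊s⌋:ℝ) + 1 ≤ (k:ℝ) := by exact_mod_cast Int.add_one_le_of_lt h
    nlinarith [mul_nonneg (by linarith : (0:ℝ) ≤ (k:ℝ) - ⌊s⌋) (by linarith : (0:ℝ) ≤ (k:ℝ) - ⌊s⌋ + 1 - 2*(s - ⌊s⌋))]

lemma convexOn_of_affine_support (S : Set ℝ) (hS : Convex ℝ S) (f : ℝ → ℝ)
    (h : ∀ z ∈ S, ∃ p q : ℝ, p * z + q = f z ∧ ∀ x ∈ S, p * x + q ≤ f x) :
    ConvexOn ℝ S f := by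
  refine ⟨hS, fun x hx y hy a bb ha hb hab => ?_⟩
  obtain ⟨p, q, hpq, hle⟩ := h _ (hS hx hy ha hb hab)
  have h1 := mul_le_mul_of_nonneg_left (hle x hx) ha
  have h2 := mul_le_mul_of_nonneg_left (hle y hy) hb
  simp only [smul_eq_mul] at *
  have e : p * (a*x+bb*y) + q = a*(p*x+q) + bb*(p*y+q) := by linear_combination q * hab.symm
  linarith [e ▸ hpq]

set_option maxHeartbeats 1000000 in
theorem stmt18 (K M : ℕ) (hK : 2 ≤ K) (hM : 2 ≤ M) (l : ℕ) (hl : l ≤ 2 * M - 3) :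
    let N : ℕ := (K - 1) * M + 1 + l
    let L : ℕ := min N (K * M)
    let b : ℕ := l / 2
    let c : ℝ := (b : ℝ) * ((b : ℝ) + 1) + 2 * ((b : ℝ) + 1) * ((l : ℝ) / 2 - (b : ℝ))
    let dstar : ℝ → ℝ := fun r =>
      (M : ℝ) * (N : ℝ) - c - ((N : ℝ) + (M : ℝ) - 1 - (l : ℝ)) * r
    let j₂ : ℝ := (((K - 1) * M + (l + 1) / 2 : ℕ) : ℝ) / (K : ℝ)
    let F : ℝ → ℝ := fun r =>
      if r ≤ (b : ℝ) + 1 then dFC M N r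
      else if r ≤ j₂ then dstar r
      else dFC (K * M) N ((K : ℝ) * r)
    (dFC M N ((b : ℝ) + 1) = dstar ((b : ℝ) + 1)) ∧
    (dstar j₂ = dFC (K * M) N ((K : ℝ) * j₂)) ∧
    ConvexOn ℝ (Set.Icc 0 ((L : ℝ) / (K : ℝ))) F := by
  intro N L b c dstar j₂ F
  have hbdef : b = l / 2 := rfl
  have hNdef : N = (K - 1) * M + 1 + l := rfl
  have hcdef : c = (b : ℝ) * ((b : ℝ) + 1) + 2 * ((b : ℝ) + 1) * ((l : ℝ) / 2 - (b : ℝ)) := rfl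
  have hds : ∀ r, dstar r = (M : ℝ) * (N : ℝ) - c - ((N : ℝ) + (M : ℝ) - 1 - (l : ℝ)) * r :=
    fun r => rfl
  have hj2 : j₂ = (((K - 1) * M + (l + 1) / 2 : ℕ) : ℝ) / (K : ℝ) := rfl
  have hF : ∀ r, F r = if r ≤ (b : ℝ) + 1 then dFC M N r
      else if r ≤ j₂ then dstar r else dFC (K * M) N ((K : ℝ) * r) := fun r => rfl
  obtain ⟨e, he1, hle2⟩ : ∃ e, e ≤ 1 ∧ l = 2 * b + e := ⟨l % 2, by omega, by omega⟩
  obtain ⟨m, hm⟩ : ∃ m : ℕ, (K - 1) * M + (l + 1) / 2 = m := ⟨_, rfl⟩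
  rw [hm] at hj2
  have h12 : (l + 1) / 2 = b + e := by omega
  have hbM : b + 2 ≤ M := by omega
  -- real facts
  have hK0 : (0:ℝ) < (K:ℝ) := by positivity
  have hKr : (2:ℝ) ≤ (K:ℝ) := by exact_mod_cast hK
  have hMr : (2:ℝ) ≤ (M:ℝ) := by exact_mod_cast hM
  have hK1cast : ((K - 1 : ℕ) : ℝ) = (K:ℝ) - 1 := by
    rw [Nat.cast_sub (by omega : 1 ≤ K)]; norm_num
  have hlr : (l:ℝ) = 2*(b:ℝ) + (e:ℝ) := by rw [hle2]; push_cast; ring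
  have her0 : (0:ℝ) ≤ (e:ℝ) := by positivity
  have her1 : (e:ℝ) ≤ 1 := by exact_mod_cast he1
  have hNr : (N:ℝ) = ((K:ℝ)-1)*(M:ℝ) + 1 + 2*(b:ℝ) + (e:ℝ) := by
    rw [hNdef, hle2]; push_cast [hK1cast]; ring
  have hmr : (m:ℝ) = ((K:ℝ)-1)*(M:ℝ) + (b:ℝ) + (e:ℝ) := by
    rw [← hm, h12]; push_cast [hK1cast]; ring
  have hcr : c = (b:ℝ)*((b:ℝ)+1) + ((b:ℝ)+1)*(e:ℝ) := by rw [hcdef, hlr]; ring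
  have hslope : (N:ℝ) + (M:ℝ) - 1 - (l:ℝ) = (K:ℝ)*(M:ℝ) := by rw [hNr, hlr]; ring
  have hbMr : (b:ℝ) + 2 ≤ (M:ℝ) := by exact_mod_cast hbM
  have hKj₂ : (K:ℝ) * j₂ = (m:ℝ) := by rw [hj2]; field_simp
  have hbj : (b:ℝ) + 1 ≤ j₂ := by
    rw [hj2, le_div_iff₀ hK0]
    nlinarith [hmr, mul_nonneg (by linarith : (0:ℝ) ≤ (K:ℝ)-2) (by linarith : (0:ℝ) ≤ (M:ℝ)-(b:ℝ)-2)]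
  have hflb : ((⌊(b:ℝ)+1⌋ : ℤ) : ℝ) = (b:ℝ) + 1 := by
    rw [show ((b:ℝ)+1) = (((b+1:ℕ)):ℝ) by push_cast; ring, Int.floor_natCast]; push_cast; ring
  have hflm : ((⌊((m:ℕ):ℝ)⌋ : ℤ) : ℝ) = (m:ℝ) := by rw [Int.floor_natCast]; push_cast; ring
  -- junction equalities
  have eq1 : dFC M N ((b:ℝ)+1) = dstar ((b:ℝ)+1) := by
    rw [dFC_eq_line, hflb, hds, hcr, hlr]; ring
  have eq2 : dstar j₂ = dFC (K*M) N ((K:ℝ)*j₂) := by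
    have h3 : ((N:ℝ) + (M:ℝ) - 1 - (l:ℝ)) * j₂ = (M:ℝ) * (m:ℝ) := by
      rw [hslope, mul_comm (K:ℝ) (M:ℝ), mul_assoc, hKj₂]
    rw [hds, hKj₂, dFC_eq_line, hflm, h3]
    push_cast
    rw [hcr, hNr, hmr]; ring
  refine ⟨eq1, eq2, ?_⟩
  -- helper inequalities
  have hf2f1 : ∀ x : ℝ, dstar x ≤ dFC M N x := by
    intro x
    have h1 := lineLe M N (b:ℤ) x
    have h2 := lineLe M N ((b:ℤ)+1) x
    push_cast at h1 h2
    have w1 : (0:ℝ) ≤ 1 - (e:ℝ)/2 := by linarith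
    have w2 : (0:ℝ) ≤ (e:ℝ)/2 := by linarith
    have h1' := mul_le_mul_of_nonneg_left h1 w1
    have h2' := mul_le_mul_of_nonneg_left h2 w2
    rw [hds, hcr, hlr]
    linarith [h1', h2']
  have hf2f3 : ∀ x : ℝ, dstar x ≤ dFC (K*M) N ((K:ℝ)*x) := by
    intro x
    have h1 := lineLe (K*M) N ((m:ℤ)-1) ((K:ℝ)*x)
    have h2 := lineLe (K*M) N (m:ℤ) ((K:ℝ)*x)
    push_cast at h1 h2
    rw [hNr, hmr] at h1 h2
    have w1 : (0:ℝ) ≤ 1 - (e:ℝ)/2 := by linarith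
    have w2 : (0:ℝ) ≤ (e:ℝ)/2 := by linarith
    have h1' := mul_le_mul_of_nonneg_left h1 w2
    have h2' := mul_le_mul_of_nonneg_left h2 w1
    rw [hds, hcr, hlr, hNr]
    linarith [h1', h2']
  have hLf2 : ∀ j : ℤ, (j:ℝ) ≤ (b:ℝ) → ∀ x : ℝ, (b:ℝ)+1 ≤ x →
      (M:ℝ)*(N:ℝ) - (j:ℝ)*((j:ℝ)+1) + (2*(j:ℝ)+1-(M:ℝ)-(N:ℝ))*x ≤ dstar x := by
    intro j hj x hx
    have h1 := lineLe M N j ((b:ℝ)+1)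
    rw [dFC_eq_line, hflb] at h1
    have hprod := mul_nonneg (by linarith : (0:ℝ) ≤ 2*(b:ℝ)+(e:ℝ) - 2*(j:ℝ))
      (by linarith : (0:ℝ) ≤ x - ((b:ℝ)+1))
    rw [hds, hcr, hlr]
    linarith [h1, hprod]
  have hAf2 : ∀ k : ℤ, (m:ℝ) ≤ (k:ℝ) → ∀ x : ℝ, x ≤ j₂ →
      (K:ℝ)*(M:ℝ)*(N:ℝ) - (k:ℝ)*((k:ℝ)+1) + (2*(k:ℝ)+1-(K:ℝ)*(M:ℝ)-(N:ℝ))*((K:ℝ)*x) ≤ dstar x := by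
    intro k hk x hx
    have h1 := lineLe (K*M) N k ((K:ℝ)*j₂)
    rw [← eq2] at h1
    push_cast at h1
    rw [hds] at h1
    have hsl : (0:ℝ) ≤ (2*(k:ℝ)+1-(K:ℝ)*(M:ℝ)-(N:ℝ))*(K:ℝ) + ((N:ℝ)+(M:ℝ)-1-(l:ℝ)) := by
      have hkm : (0:ℝ) ≤ (K:ℝ) * ((k:ℝ) - (m:ℝ)) := mul_nonneg (le_of_lt hK0) (by linarith)
      rw [hmr] at hkm
      have hke : (0:ℝ) ≤ (K:ℝ) * (e:ℝ) := mul_nonneg (le_of_lt hK0) her0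
      rw [hNr, hlr]
      nlinarith [hkm, hke]
    have hprod := mul_nonneg hsl (by linarith : (0:ℝ) ≤ j₂ - x)
    rw [hds]
    linarith [h1, hprod]
  -- convexity
  have hmain : ConvexOn ℝ Set.univ F := by
    apply convexOn_of_affine_support _ convex_univ
    intro z _
    rcases lt_or_ge z ((b:ℝ)+1) with hz1 | hz1
    · refine ⟨2*((⌊z⌋:ℤ):ℝ)+1-(M:ℝ)-(N:ℝ), (M:ℝ)*(N:ℝ) - ((⌊z⌋:ℤ):ℝ)*(((⌊z⌋:ℤ):ℝ)+1), ?_, ?_⟩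
      · rw [hF z, if_pos hz1.le, dFC_eq_line]; ring
      · intro x _
        have hjb : ((⌊z⌋:ℤ):ℝ) ≤ (b:ℝ) := by
          have h5 : ⌊z⌋ < (b:ℤ)+1 := Int.floor_lt.2 (by push_cast; linarith)
          exact_mod_cast Int.le_of_lt_add_one h5
        rw [hF x]; split_ifs with hx1 hx2
        · linarith [lineLe M N ⌊z⌋ x]
        · linarith [hLf2 ⌊z⌋ hjb x (by linarith)]
        · linarith [hLf2 ⌊z⌋ hjb x (by linarith [hbj]), hf2f3 x]
    · rcases le_or_gt z j₂ with hz2 | hz2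
      · refine ⟨-((N:ℝ)+(M:ℝ)-1-(l:ℝ)), (M:ℝ)*(N:ℝ) - c, ?_, ?_⟩
        · rcases le_or_gt z ((b:ℝ)+1) with h | h
          · have hzb : z = (b:ℝ)+1 := le_antisymm h hz1
            rw [hF z, if_pos h, hzb, eq1, hds]; ring
          · rw [hF z, if_neg (not_le.2 h), if_pos hz2, hds]; ring
        · intro x _
          rw [hF x]; split_ifs with hx1 hx2
          · have h5 := hf2f1 x; rw [hds] at h5; linarith
          · refine le_of_eq ?_; rw [hds]; ring
          · have h5 := hf2f3 x; rw [hds] at h5; linarith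
      · refine ⟨(2*((⌊(K:ℝ)*z⌋:ℤ):ℝ)+1-(K:ℝ)*(M:ℝ)-(N:ℝ))*(K:ℝ),
          (K:ℝ)*(M:ℝ)*(N:ℝ) - ((⌊(K:ℝ)*z⌋:ℤ):ℝ)*(((⌊(K:ℝ)*z⌋:ℤ):ℝ)+1), ?_, ?_⟩
        · rw [hF z, if_neg (by push_neg; linarith [hbj]), if_neg (not_le.2 hz2), dFC_eq_line]
          push_cast; ring
        · intro x _
          have hj'm : ((m:ℕ):ℝ) ≤ ((⌊(K:ℝ)*z⌋:ℤ):ℝ) := by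
            have h5 : ((m:ℕ):ℤ) ≤ ⌊(K:ℝ)*z⌋ := by
              apply Int.le_floor.2
              push_cast
              have := mul_lt_mul_of_pos_left hz2 hK0
              rw [hKj₂] at this; linarith
            exact_mod_cast h5
          rw [hF x]; split_ifs with hx1 hx2
          · have h5 := hAf2 ⌊(K:ℝ)*z⌋ hj'm x (by linarith [hbj])
            have h6 := hf2f1 x
            linarith
          · linarith [hAf2 ⌊(K:ℝ)*z⌋ hj'm x hx2]
          · have h5 := lineLe (K*M) N ⌊(K:ℝ)*z⌋ ((K:ℝ)*x)
            push_cast at h5; linarith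
  exact hmain.subset (Set.subset_univ _) (convex_Icc _ _)
end
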